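/- For every graph G and every k, G has a layout of width at most k if and only if the empty partial layout is k-extendable; equivalently, lw(G) ≤ k iff for every closed set F reached by repeatedly adding edges e with d(F ∪ {e}) ≤ k and taking closures starting from ∅, eventually F = E is reached. -/

import Mathlib

variable {V : Type*} [Fintype V] [DecidableEq V]

/-- `Vs F` is the set of endpoints of edges in `F`. -/
def Vs (F : Finset (Sym2 V)) : Finset V :=
  Finset.univ.filter (fun v => ∃ e ∈ F, v ∈ e)

/-- The set of endpoints of a single edge. -/
def eset (e : Sym2 V) : Finset V := Finset.univ.filter (fun v => v ∈ e)

/-- `mids E F` is mid(F) = V(F) ∩ V(E \ F), relative to the edge set `E`. -/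
def mids (E F : Finset (Sym2 V)) : Finset V := Vs F ∩ Vs (E \ F)

/-- `dd E F` is d(F) = |mid(F)|, relative to the edge set `E`. -/
def dd (E F : Finset (Sym2 V)) : ℕ := (mids E F).card

/-- A layout of the edge set `E`: a duplicate-free list enumerating `E`
(equivalently, a bijection {1,…,m} → E). -/
def IsLayout (E : Finset (Sym2 V)) (L : List (Sym2 V)) : Prop :=
  L.Nodup ∧ L.toFinset = E

/-- The (partial) layout `L` has width at most `k` w.r.t. the edge set `E`:
every prefix `π_{≤ i}` satisfies d(π_{≤ i}) ≤ k. -/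
def WidthLE (E : Finset (Sym2 V)) (L : List (Sym2 V)) (k : ℕ) : Prop :=
  ∀ i, dd E (L.take i).toFinset ≤ k

/-- The linearwidth of the edge set `E`: the minimum width of a layout of `E`. -/
noncomputable def lw (E : Finset (Sym2 V)) : ℕ :=
  sInf {k | ∃ L, IsLayout E L ∧ WidthLE E L k}

/-- The number of edges of `S` incident to `u`. -/
def degIn (S : Finset (Sym2 V)) (u : V) : ℕ := (S.filter (fun e => u ∈ e)).card

/-- `X` is a path decomposition of `G`, given as a list of bags. -/
def IsPD (G : SimpleGraph V) (X : List (Finset V)) : Prop :=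
  (∀ v : V, ∃ B ∈ X, v ∈ B) ∧
  (∀ e ∈ G.edgeSet, ∃ B ∈ X, eset e ⊆ B) ∧
  (∀ v : V, ∀ i j l : ℕ, i ≤ j → j ≤ l → l < X.length →
    v ∈ X.getD i ∅ → v ∈ X.getD l ∅ → v ∈ X.getD j ∅)

/-- The pathwidth of `G`: the minimum over path decompositions of (max bag size) − 1. -/
noncomputable def pw (G : SimpleGraph V) : ℕ :=
  sInf {k | ∃ X, IsPD G X ∧ ∀ B ∈ X, B.card ≤ k + 1}

/-- The closure F* of `F` in `E`: all edges of `E` with both endpoints in `V(F)`. -/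
def cl (E F : Finset (Sym2 V)) : Finset (Sym2 V) := E.filter (fun e => eset e ⊆ Vs F)

/-- A partial layout `S` is `k`-extendable: it is a prefix of some layout
of `E` of width at most `k`. -/
def Extendable (E : Finset (Sym2 V)) (k : ℕ) (S : List (Sym2 V)) : Prop :=
  ∃ L, IsLayout E L ∧ WidthLE E L k ∧ S <+: L

/-!
A layout of width `≤ k` yields a run of the closure process: at each edge `e` of the layout
either `e` already lies in the closure of the prefix before it, or it can be added to that
closure, since `F ⊆ F* ∪ {e} ⊆ (F ∪ {e})*` and `d` can only drop between a set and its
closure.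
Conversely a run of the closure process is turned into a layout edge by edge: each step
`F ↦ (F ∪ {e})*` appends `e` and then the rest of the closure, and every prefix created this
way again lies between `F ∪ {e}` and its closure, so has `d ≤ d(F ∪ {e}) ≤ k`.
-/

open Finset

lemma mem_Vs {F : Finset (Sym2 V)} {v : V} : v ∈ Vs F ↔ ∃ e ∈ F, v ∈ e := by
  simp [Vs]

lemma mem_eset {e : Sym2 V} {v : V} : v ∈ eset e ↔ v ∈ e := by
  simp [eset]

lemma Vs_mono {F G : Finset (Sym2 V)} (h : F ⊆ G) : Vs F ⊆ Vs G := fun _ hv =>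
  let ⟨e, he, hve⟩ := mem_Vs.1 hv
  mem_Vs.2 ⟨e, h he, hve⟩

lemma Vs_empty : Vs (∅ : Finset (Sym2 V)) = ∅ := by
  ext v; simp [mem_Vs]

lemma Vs_insert (e : Sym2 V) (F : Finset (Sym2 V)) : Vs (insert e F) = eset e ∪ Vs F := by
  ext v; simp [mem_Vs, mem_eset]

lemma eset_subset_Vs {F : Finset (Sym2 V)} {e : Sym2 V} (he : e ∈ F) : eset e ⊆ Vs F :=
  fun _ hv => mem_Vs.2 ⟨e, he, mem_eset.1 hv⟩

lemma dd_empty (E : Finset (Sym2 V)) : dd E ∅ = 0 := by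
  simp [dd, mids, Vs_empty]

lemma cl_subset (E F : Finset (Sym2 V)) : cl E F ⊆ E := filter_subset _ _

lemma subset_cl {E F : Finset (Sym2 V)} (h : F ⊆ E) : F ⊆ cl E F := fun _ he =>
  mem_filter.2 ⟨h he, eset_subset_Vs he⟩

lemma cl_mono {E F G : Finset (Sym2 V)} (h : F ⊆ G) : cl E F ⊆ cl E G := fun _ he =>
  mem_filter.2 ⟨(mem_filter.1 he).1, (mem_filter.1 he).2.trans (Vs_mono h)⟩

lemma cl_congr {E F G : Finset (Sym2 V)} (h : Vs F = Vs G) : cl E F = cl E G := by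
  simp only [cl, h]

lemma Vs_cl_subset (E F : Finset (Sym2 V)) : Vs (cl E F) ⊆ Vs F := fun _ hv =>
  let ⟨_, he, hve⟩ := mem_Vs.1 hv
  (mem_filter.1 he).2 (mem_eset.2 hve)

lemma Vs_cl {E F : Finset (Sym2 V)} (h : F ⊆ E) : Vs (cl E F) = Vs F :=
  (Vs_cl_subset E F).antisymm (Vs_mono (subset_cl h))

lemma cl_self (E : Finset (Sym2 V)) : cl E E = E :=
  (cl_subset E E).antisymm (subset_cl le_rfl)

lemma cl_empty (E : Finset (Sym2 V)) : cl E ∅ = ∅ := by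
  refine eq_empty_of_forall_notMem fun e he => ?_
  have hout : e.out.1 ∈ Vs (∅ : Finset (Sym2 V)) :=
    (mem_filter.1 he).2 (mem_eset.2 (Sym2.out_fst_mem e))
  simp [Vs_empty] at hout

lemma dd_le_of_subset_of_subset_cl {E A S : Finset (Sym2 V)} (hAS : A ⊆ S) (hS : S ⊆ cl E A) :
    dd E S ≤ dd E A :=
  card_le_card <| inter_subset_inter ((Vs_mono hS).trans (Vs_cl_subset E A))
    (Vs_mono (sdiff_subset_sdiff le_rfl hAS))

lemma widthLE_nil (E : Finset (Sym2 V)) (k : ℕ) : WidthLE E [] k := fun _ => by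
  simp [dd_empty]

lemma widthLE_append_iff {E : Finset (Sym2 V)} {k : ℕ} {L M : List (Sym2 V)} :
    WidthLE E (L ++ M) k ↔ WidthLE E L k ∧ ∀ j, dd E (L ++ M.take j).toFinset ≤ k := by
  refine ⟨fun h => ⟨fun i => ?_, fun j => ?_⟩, fun ⟨hL, hM⟩ i => ?_⟩
  · rcases le_or_gt i L.length with hi | hi
    · simpa [List.take_append_of_le_length hi] using h i
    · simpa [List.take_of_length_le hi.le, List.take_append_of_le_length le_rfl] using h L.length
  · simpa [List.take_length_add_append] using h (L.length + j)
  · rcases le_or_gt i L.length with hi | hi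
    · simpa [List.take_append_of_le_length hi] using hL i
    · simpa [List.take_append, List.take_of_length_le hi.le] using hM (i - L.length)

lemma widthLE_append_singleton_iff {E : Finset (Sym2 V)} {k : ℕ} {L : List (Sym2 V)}
    {a : Sym2 V} :
    WidthLE E (L ++ [a]) k ↔ WidthLE E L k ∧ dd E (insert a L.toFinset) ≤ k := by
  refine widthLE_append_iff.trans (and_congr_right fun hL => ⟨fun h => ?_, fun h j => ?_⟩)
  · simpa using h 1
  · rcases j with _ | j
    · simpa using hL L.length
    · simpa using h

lemma lw_le_iff {E : Finset (Sym2 V)} {k : ℕ} :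
    lw E ≤ k ↔ ∃ L, IsLayout E L ∧ WidthLE E L k := by
  refine ⟨fun h => ?_, fun ⟨L, hL, hw⟩ => Nat.sInf_le ⟨L, hL, hw⟩⟩
  have hne : {k | ∃ L, IsLayout E L ∧ WidthLE E L k}.Nonempty :=
    ⟨Fintype.card V, E.toList, ⟨E.nodup_toList, E.toList_toFinset⟩, fun _ => card_le_univ _⟩
  obtain ⟨L, hL, hw⟩ := Nat.sInf_mem hne
  exact ⟨L, hL, fun i => (hw i).trans h⟩

lemma Extendable.of_prefix {E : Finset (Sym2 V)} {k : ℕ} {S T : List (Sym2 V)}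
    (hT : Extendable E k T) (hST : S <+: T) : Extendable E k S :=
  let ⟨L, hL, hw, hTL⟩ := hT
  ⟨L, hL, hw, hST.trans hTL⟩

def ClosureStep (E : Finset (Sym2 V)) (k : ℕ) (F Fp : Finset (Sym2 V)) : Prop :=
  ∃ e ∈ E \ F, dd E (insert e F) ≤ k ∧ Fp = cl E (insert e F)

lemma reflTransGen_closureStep_cl_insert {E F : Finset (Sym2 V)} {k : ℕ} {e : Sym2 V}
    (hF : F ⊆ E) (he : e ∈ E) (hdd : dd E (insert e F) ≤ k) :
    Relation.ReflTransGen (ClosureStep E k) (cl E F) (cl E (insert e F)) := by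
  have hVs : Vs (insert e (cl E F)) = Vs (insert e F) := by
    rw [Vs_insert, Vs_insert, Vs_cl hF]
  by_cases hcl : e ∈ cl E F
  · have hVs' : Vs (insert e F) = Vs F := by
      rw [Vs_insert, union_eq_right.2 (mem_filter.1 hcl).2]
    rw [cl_congr hVs']
  · refine .single ⟨e, mem_sdiff.2 ⟨he, hcl⟩, ?_, (cl_congr hVs).symm⟩
    have hsub : insert e (cl E F) ⊆ cl E (insert e F) :=
      insert_subset (subset_cl (insert_subset he hF) (mem_insert_self e F))
        (cl_mono (subset_insert e F))
    exact (dd_le_of_subset_of_subset_cl (insert_subset_insert e (subset_cl hF)) hsub).trans hdd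

lemma reflTransGen_closureStep_of_widthLE {E : Finset (Sym2 V)} {k : ℕ} (L : List (Sym2 V))
    (hL : L.toFinset ⊆ E) (hw : WidthLE E L k) :
    Relation.ReflTransGen (ClosureStep E k) ∅ (cl E L.toFinset) := by
  induction L using List.reverseRecOn with
  | nil => simp [cl_empty, Relation.ReflTransGen.refl]
  | append_singleton L a ih =>
    have hsnoc : (L ++ [a]).toFinset = insert a L.toFinset := by
      ext; simp
    rw [hsnoc] at hL ⊢
    obtain ⟨hwL, hdd⟩ := widthLE_append_singleton_iff.1 hw
    have hLE : L.toFinset ⊆ E := (subset_insert _ _).trans hL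
    exact (ih hLE hwL).trans
      (reflTransGen_closureStep_cl_insert hLE (hL (mem_insert_self a _)) hdd)

noncomputable def closureExtension (E : Finset (Sym2 V)) (L : List (Sym2 V)) (e : Sym2 V) :
    List (Sym2 V) :=
  L ++ e :: (cl E (insert e L.toFinset) \ insert e L.toFinset).toList

section closureExtension

variable {E : Finset (Sym2 V)} {L : List (Sym2 V)} {e : Sym2 V}

lemma toFinset_closureExtension (hL : L.toFinset ⊆ E) (he : e ∈ E) :
    (closureExtension E L e).toFinset = cl E (insert e L.toFinset) := by
  rw [closureExtension, List.toFinset_append, List.toFinset_cons, Finset.toList_toFinset,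
    union_insert, ← insert_union, union_sdiff_of_subset (subset_cl (insert_subset he hL))]

lemma nodup_closureExtension (hL : L.Nodup) (he : e ∉ L) : (closureExtension E L e).Nodup := by
  refine List.nodup_append.2 ⟨hL, List.nodup_cons.2 ⟨by simp, nodup_toList _⟩, ?_⟩
  rintro a ha b hb rfl
  rcases List.mem_cons.1 hb with rfl | hb
  · exact he ha
  · simp [ha] at hb

lemma widthLE_closureExtension {k : ℕ} (hL : L.toFinset ⊆ E) (he : e ∈ E) (hw : WidthLE E L k)
    (hdd : dd E (insert e L.toFinset) ≤ k) : WidthLE E (closureExtension E L e) k := by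
  refine widthLE_append_iff.2 ⟨hw, fun j => ?_⟩
  rcases j with _ | j
  · simpa using hw L.length
  refine le_trans (dd_le_of_subset_of_subset_cl (fun a ha => ?_) ?_) hdd
  · rcases mem_insert.1 ha with rfl | ha <;> simp_all
  · refine subset_trans (fun a ha => ?_) (toFinset_closureExtension hL he).le
    rw [List.mem_toFinset] at ha ⊢
    exact ((List.prefix_append_right_inj L).2 (List.take_prefix _ _)).subset ha

end closureExtension

lemma extendable_of_reflTransGen {E : Finset (Sym2 V)} {k : ℕ} {L : List (Sym2 V)}
    (h : Relation.ReflTransGen (ClosureStep E k) L.toFinset E) (hnd : L.Nodup)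
    (hL : L.toFinset ⊆ E) (hw : WidthLE E L k) : Extendable E k L := by
  generalize hF : L.toFinset = F at h
  induction h using Relation.ReflTransGen.head_induction_on generalizing L with
  | refl => exact ⟨L, ⟨hnd, hF⟩, hw, List.prefix_refl L⟩
  | head hstep _ ih =>
    obtain ⟨e, he, hdd, rfl⟩ := hstep
    subst hF
    obtain ⟨heE, heL⟩ := mem_sdiff.1 he
    refine (ih (L := closureExtension E L e) (nodup_closureExtension hnd (by simpa using heL))
      ?_ (widthLE_closureExtension hL heE hw hdd) (toFinset_closureExtension hL heE)).of_prefix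
      (List.prefix_append _ _)
    rw [toFinset_closureExtension hL heE]
    exact cl_subset _ _

/-- G has a layout of width ≤ k iff the empty partial layout is k-extendable;
equivalently, lw(G) ≤ k iff E is reachable from ∅ by repeatedly adding an edge e
with d(F ∪ {e}) ≤ k and taking closures. -/
theorem stmt19 (E : Finset (Sym2 V)) (k : ℕ) :
    ((∃ L, IsLayout E L ∧ WidthLE E L k) ↔ Extendable E k ([] : List (Sym2 V))) ∧
    (lw E ≤ k ↔
      Relation.ReflTransGen
        (fun F Fp : Finset (Sym2 V) =>
          ∃ e ∈ E \ F, dd E (insert e F) ≤ k ∧ Fp = cl E (insert e F))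
        ∅ E) := by
  refine ⟨⟨fun ⟨L, hL, hw⟩ => ⟨L, hL, hw, List.nil_prefix⟩,
    fun ⟨L, hL, hw, _⟩ => ⟨L, hL, hw⟩⟩, ?_⟩
  rw [lw_le_iff]
  constructor
  · rintro ⟨L, hL, hw⟩
    have h := reflTransGen_closureStep_of_widthLE L hL.2.le hw
    rwa [hL.2, cl_self] at h
  · intro h
    obtain ⟨L, hL, hw, -⟩ := extendable_of_reflTransGen (L := []) h List.nodup_nil
      (by simp) (widthLE_nil E k)
    exact ⟨L, hL, hw⟩
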